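/- arXiv:1305.0612 — 3 statements merged into one kernel-verified Lean document; each statement's English description precedes it below -/
import Mathlib

section
/- Exponential mean value trace inequality: for all Hermitian matrices A, B, C of the same size and all s > 0, |tr[C(e^A − e^B)]| ≤ (1/4) tr[(s(A−B)² + s^{-1}C²)(e^A + e^B)]. -/
/-!
Diagonalize `A = U diag(a) U*` and `B = V diag(b) V*` and write every matrix in the mixed
basis, `X ↦ U* X V`. With `W = U* V` and `c = U* C V` one has `(U* (A - B) V)ᵢⱼ = (aᵢ - bⱼ) Wᵢⱼ`,
and both traces become double sums over `(i, j)`: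
`tr[C(e^A - e^B)] = ∑ cᵢⱼ conj(Wᵢⱼ) (e^aᵢ - e^bⱼ)` and
`tr[(s(A-B)² + s⁻¹C²)(e^A + e^B)] = ∑ (s |(aᵢ - bⱼ) Wᵢⱼ|² + s⁻¹ |cᵢⱼ|²) (e^aᵢ + e^bⱼ)`.
The inequality then holds term by term: `|e^p - e^q| ≤ |p - q| (e^p + e^q) / 2` (the logarithmic
mean is at most the arithmetic mean), followed by `2xy ≤ s y² + s⁻¹ x²`.
-/

open Matrix

namespace Real

lemma exp_sub_one_le_mul_exp_add_one_div_two {u : ℝ} (hu : 0 ≤ u) :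
    exp u - 1 ≤ u * (exp u + 1) / 2 := by
  let g : ℝ → ℝ := fun x ↦ x * (exp x + 1) - 2 * (exp x - 1)
  have hg : ∀ x, HasDerivAt g (1 + (x - 1) * exp x) x := fun x ↦
    (((hasDerivAt_id x).mul ((hasDerivAt_exp x).add_const 1)).sub
      (((hasDerivAt_exp x).sub_const 1).const_mul 2)).congr_deriv (by simp only [id_eq]; ring)
  have hg' : ∀ x, 0 ≤ 1 + (x - 1) * exp x := fun x ↦ by
    have h := mul_le_mul_of_nonneg_right (one_sub_le_exp_neg x) (exp_pos x).le
    rw [← exp_add, neg_add_cancel, exp_zero] at h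
    linarith
  have := monotone_of_hasDerivAt_nonneg hg hg' hu
  simp only [g, exp_zero] at this
  linarith

lemma abs_exp_sub_exp_le (p q : ℝ) : |exp p - exp q| ≤ |p - q| * (exp p + exp q) / 2 := by
  wlog hqp : q ≤ p generalizing p q
  · simpa only [abs_sub_comm, add_comm] using this q p (le_of_not_ge hqp)
  have hexp : exp p = exp q * exp (p - q) := by rw [← exp_add, add_sub_cancel]
  rw [abs_of_nonneg (sub_nonneg.mpr (exp_le_exp.mpr hqp)), abs_of_nonneg (sub_nonneg.mpr hqp)]
  calc exp p - exp q = exp q * (exp (p - q) - 1) := by rw [hexp]; ring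
    _ ≤ exp q * ((p - q) * (exp (p - q) + 1) / 2) := by
      gcongr; exact exp_sub_one_le_mul_exp_add_one_div_two (sub_nonneg.mpr hqp)
    _ = (p - q) * (exp p + exp q) / 2 := by rw [hexp]; ring

lemma mul_mul_abs_exp_sub_exp_le {s : ℝ} (hs : 0 < s) {x y : ℝ} (hx : 0 ≤ x) (hy : 0 ≤ y)
    (a b : ℝ) :
    x * y * |exp a - exp b| ≤ 1 / 4 * ((s * ((a - b) * y) ^ 2 + s⁻¹ * x ^ 2) * (exp a + exp b)) :=
  calc x * y * |exp a - exp b|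
      ≤ x * y * (|a - b| * (exp a + exp b) / 2) := by gcongr; exact abs_exp_sub_exp_le a b
    _ = 2 * (|a - b| * y) * x * (exp a + exp b) / 4 := by ring
    _ ≤ (s * (|a - b| * y) ^ 2 + s⁻¹ * x ^ 2) * (exp a + exp b) / 4 := by
      gcongr; exact two_mul_le_add_mul_sq hs
    _ = _ := by rw [mul_pow, sq_abs, ← mul_pow]; ring

end Real

section Semiring

variable {n R : Type*} [Fintype n] [DecidableEq n] [CommSemiring R]

lemma Matrix.trace_mul_mul_diagonal_mul (M U P : Matrix n n R) (α : n → R) :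
    trace (M * (U * diagonal α * P)) = ∑ i, (P * M * U) i i * α i := by
  rw [← Matrix.mul_assoc, trace_mul_cycle, ← Matrix.mul_assoc]
  simp [trace, mul_diagonal]

variable [StarRing R] {U V : Matrix n n R}

lemma Matrix.trace_mul_star_mul_conj_diagonal (hV : V * star V = 1) (X Y : Matrix n n R)
    (α : n → R) :
    trace (Y * star X * (U * diagonal α * star U)) =
      ∑ i, ∑ j, (star U * Y * V) i j * star ((star U * X * V) i j) * α i := by
  have h : star U * (Y * star X) * U = star U * Y * V * star (star U * X * V) := by
    simp only [star_mul, star_star, Matrix.mul_assoc, ← Matrix.mul_assoc V, hV, Matrix.one_mul]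
  rw [trace_mul_mul_diagonal_mul, h]
  simp only [mul_apply (M := star U * Y * V), star_apply, Finset.sum_mul]

lemma Matrix.trace_star_mul_mul_conj_diagonal (hU : U * star U = 1) (X Y : Matrix n n R)
    (β : n → R) :
    trace (star X * Y * (V * diagonal β * star V)) =
      ∑ i, ∑ j, star ((star U * X * V) i j) * (star U * Y * V) i j * β j := by
  have h : star V * (star X * Y) * V = star (star U * X * V) * (star U * Y * V) := by
    simp only [star_mul, star_star, Matrix.mul_assoc, ← Matrix.mul_assoc U, hU, Matrix.one_mul]
  rw [Finset.sum_comm, trace_mul_mul_diagonal_mul, h]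
  simp only [mul_apply (M := star (star U * X * V)), star_apply, Finset.sum_mul]

end Semiring

section Ring

variable {n R : Type*} [Fintype n] [DecidableEq n] [CommRing R] [StarRing R] {U V : Matrix n n R}

lemma Matrix.trace_mul_sub_conj_diagonal (hU : U * star U = 1) (hV : V * star V = 1)
    (C : Matrix n n R) (α β : n → R) :
    trace (C * (U * diagonal α * star U - V * diagonal β * star V)) =
      ∑ i, ∑ j, (star U * C * V) i j * star ((star U * V) i j) * (α i - β j) := by
  have hα := trace_mul_star_mul_conj_diagonal (U := U) hV 1 C α
  have hβ := trace_star_mul_mul_conj_diagonal (V := V) hU 1 C β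
  simp only [star_one, Matrix.mul_one, Matrix.one_mul] at hα hβ
  rw [Matrix.mul_sub, trace_sub, hα, hβ, ← Finset.sum_sub_distrib]
  refine Finset.sum_congr rfl fun i _ ↦ ?_
  rw [← Finset.sum_sub_distrib]
  exact Finset.sum_congr rfl fun j _ ↦ by ring

lemma Matrix.trace_sq_mul_add_conj_diagonal (hU : U * star U = 1) (hV : V * star V = 1)
    {X : Matrix n n R} (hX : star X = X) (α β : n → R) :
    trace (X ^ 2 * (U * diagonal α * star U + V * diagonal β * star V)) =
      ∑ i, ∑ j, (star U * X * V) i j * star ((star U * X * V) i j) * (α i + β j) := by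
  have hα := trace_mul_star_mul_conj_diagonal (U := U) hV X X α
  have hβ := trace_star_mul_mul_conj_diagonal (V := V) hU X X β
  rw [hX] at hα hβ
  rw [sq, Matrix.mul_add, trace_add, hα, hβ, ← Finset.sum_add_distrib]
  refine Finset.sum_congr rfl fun i _ ↦ ?_
  rw [← Finset.sum_add_distrib]
  exact Finset.sum_congr rfl fun j _ ↦ by ring

lemma Matrix.star_mul_sub_mul_apply {A B : Matrix n n R} {a b : n → R}
    (hA : A = U * diagonal a * star U) (hB : B = V * diagonal b * star V)
    (hU : star U * U = 1) (hV : star V * V = 1) (i j : n) :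
    (star U * (A - B) * V) i j = (a i - b j) * (star U * V) i j := by
  have h : star U * (A - B) * V = diagonal a * (star U * V) - (star U * V) * diagonal b := by
    subst hA hB
    simp only [Matrix.mul_sub, Matrix.sub_mul, Matrix.mul_assoc, ← Matrix.mul_assoc (star U) U, hU,
      hV, Matrix.one_mul, Matrix.mul_one]
  rw [h, sub_apply, diagonal_mul, mul_diagonal]
  ring

end Ring

section Complex

variable {n : Type*} [Fintype n]

lemma norm_sum_mul_exp_sub_exp_le {s : ℝ} (hs : 0 < s) (c w : n → n → ℂ) (a b : n → ℝ) :
    ‖∑ i, ∑ j, c i j * star (w i j) * ((Real.exp (a i) : ℂ) - Real.exp (b j))‖ ≤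
      1 / 4 * ∑ i, ∑ j, (s * ‖((a i : ℂ) - b j) * w i j‖ ^ 2 + s⁻¹ * ‖c i j‖ ^ 2) *
        (Real.exp (a i) + Real.exp (b j)) := by
  refine (norm_sum_le _ _).trans ?_
  rw [Finset.mul_sum]
  refine Finset.sum_le_sum fun i _ ↦ (norm_sum_le _ _).trans ?_
  rw [Finset.mul_sum]
  refine Finset.sum_le_sum fun j _ ↦ ?_
  have h := Real.mul_mul_abs_exp_sub_exp_le hs (norm_nonneg (c i j)) (norm_nonneg (w i j))
    (a i) (b j)
  simpa only [norm_mul, norm_star, Complex.norm_real, Real.norm_eq_abs, ← Complex.ofReal_sub,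
    abs_mul, abs_abs, mul_pow, sq_abs, ← mul_assoc] using h

variable [DecidableEq n]

lemma Matrix.IsHermitian.exists_conj_diagonal_and_exp {A : Matrix n n ℂ} (hA : A.IsHermitian) :
    ∃ (U : Matrix n n ℂ) (a : n → ℝ), U * star U = 1 ∧ star U * U = 1 ∧
      A = U * diagonal (Complex.ofReal ∘ a) * star U ∧
      NormedSpace.exp A = U * diagonal (Complex.ofReal ∘ Real.exp ∘ a) * star U := by
  have hU := hA.eigenvectorUnitary.2
  have hAU := hA.spectral_theorem
  rw [Unitary.conjStarAlgAut_apply] at hAU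
  refine ⟨_, hA.eigenvalues, Unitary.mul_star_self_of_mem hU, Unitary.star_mul_self_of_mem hU,
    hAU, ?_⟩
  conv_lhs => rw [hAU]
  rw [← inv_eq_left_inv (Unitary.star_mul_self_of_mem hU), exp_conj _ _ Unitary.isUnit_coe,
    exp_diagonal, Pi.exp_def]
  simp only [← Complex.exp_eq_exp_ℂ, Function.comp_def, Complex.ofReal_exp]
  rfl

lemma Matrix.re_trace_sq_mul_add_conj_diagonal {U V : Matrix n n ℂ} (hU : U * star U = 1)
    (hV : V * star V = 1) {X : Matrix n n ℂ} (hX : star X = X) (α β : n → ℝ) :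
    (trace (X ^ 2 * (U * diagonal (Complex.ofReal ∘ α) * star U +
        V * diagonal (Complex.ofReal ∘ β) * star V))).re =
      ∑ i, ∑ j, ‖(star U * X * V) i j‖ ^ 2 * (α i + β j) := by
  simp only [trace_sq_mul_add_conj_diagonal hU hV hX, Complex.re_sum, Complex.star_def,
    Complex.mul_conj', Function.comp_apply, ← Complex.ofReal_pow, ← Complex.ofReal_add,
    ← Complex.ofReal_mul, Complex.ofReal_re]

end Complex

/-- Exponential mean value trace inequality: for Hermitian `A, B, C` and `s > 0`,
`|tr[C(e^A − e^B)]| ≤ (1/4) tr[(s(A−B)² + s⁻¹C²)(e^A + e^B)]`. -/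
theorem exp_mean_value_trace_inequality {d : ℕ} (A B C : Matrix (Fin d) (Fin d) ℂ)
    (hA : A.IsHermitian) (hB : B.IsHermitian) (hC : C.IsHermitian) (s : ℝ) (hs : 0 < s) :
    ‖Matrix.trace (C * (NormedSpace.exp A - NormedSpace.exp B))‖ ≤
      (1 / 4) * (Matrix.trace ((s • (A - B) ^ 2 + s⁻¹ • C ^ 2) *
        (NormedSpace.exp A + NormedSpace.exp B))).re := by
  obtain ⟨U, a, hU, hU', hAU, hexpA⟩ := hA.exists_conj_diagonal_and_exp
  obtain ⟨V, b, hV, hV', hBV, hexpB⟩ := hB.exists_conj_diagonal_and_exp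
  rw [hexpA, hexpB, trace_mul_sub_conj_diagonal hU hV, Matrix.add_mul, smul_mul,
    smul_mul, trace_add, trace_smul, trace_smul, Complex.add_re, Complex.smul_re, Complex.smul_re,
    re_trace_sq_mul_add_conj_diagonal hU hV (hA.sub hB),
    re_trace_sq_mul_add_conj_diagonal hU hV hC]
  simp only [star_mul_sub_mul_apply hAU hBV hU' hV', Function.comp_apply]
  convert norm_sum_mul_exp_sub_exp_le hs (star U * C * V) (star U * V) a b using 2
  simp only [smul_eq_mul, Finset.mul_sum, ← Finset.sum_add_distrib, add_mul, mul_assoc]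
end

section
/- Polynomial mean value trace inequality: for all Hermitian matrices A, B, C of the same size, every integer q ≥ 1, and all s > 0, |tr[C(A^q − B^q)]| ≤ (q/4) tr[(s(A−B)² + s^{-1}C²)(|A|^{q−1} + |B|^{q−1})]. -/
/-!
Diagonalize `A = U diag(a) U*`, `B = V diag(b) V*` and write a matrix `X` in the two eigenbases
as `X̃ = U* X V`. Then `(A^q - B^q)~ᵢⱼ = (aᵢ^q - bⱼ^q) 1̃ᵢⱼ` and `(A - B)~ᵢⱼ = (aᵢ - bⱼ) 1̃ᵢⱼ`,
the left-hand trace is `Σᵢⱼ conj(C̃ᵢⱼ) (A^q - B^q)~ᵢⱼ`, and the right-hand trace is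
`Σᵢⱼ (s |(A - B)~ᵢⱼ|² + s⁻¹ |C̃ᵢⱼ|²) (|aᵢ|^(q-1) + |bⱼ|^(q-1))`. The inequality therefore holds
term by term, by `2xy ≤ s x² + s⁻¹ y²` and the scalar bound
`|a^q - b^q| ≤ (q/2) |a - b| (|a|^(q-1) + |b|^(q-1))`. The latter comes from
`a^q - b^q = (a - b) Σₖ aᵏ b^(q-1-k)` by pairing the terms `k` and `q-1-k`:
`xᵏ y^(m-k) + x^(m-k) yᵏ ≤ x^m + y^m` for `x, y ≥ 0`, since `(xᵏ - yᵏ)(x^(m-k) - y^(m-k)) ≥ 0`.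
-/

open Matrix Finset

section Scalar
variable {α : Type*} [Field α] [LinearOrder α] [IsStrictOrderedRing α]

lemma pow_mul_pow_add_pow_mul_pow_le {x y : α} (hx : 0 ≤ x) (hy : 0 ≤ y) {k m : ℕ}
    (hk : k ≤ m) :
    x ^ k * y ^ (m - k) + x ^ (m - k) * y ^ k ≤ x ^ m + y ^ m := by
  have hxm : x ^ k * x ^ (m - k) = x ^ m := by rw [← pow_add, Nat.add_sub_cancel' hk]
  have hym : y ^ k * y ^ (m - k) = y ^ m := by rw [← pow_add, Nat.add_sub_cancel' hk]
  have hprod : 0 ≤ (x ^ k - y ^ k) * (x ^ (m - k) - y ^ (m - k)) := by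
    rcases le_total x y with h | h
    · exact mul_nonneg_of_nonpos_of_nonpos (sub_nonpos.2 (pow_le_pow_left₀ hx h k))
        (sub_nonpos.2 (pow_le_pow_left₀ hx h _))
    · exact mul_nonneg (sub_nonneg.2 (pow_le_pow_left₀ hy h k))
        (sub_nonneg.2 (pow_le_pow_left₀ hy h _))
  nlinarith

lemma geom_sum₂_le_mul_add_pow {x y : α} (hx : 0 ≤ x) (hy : 0 ≤ y) (m : ℕ) :
    ∑ k ∈ range (m + 1), x ^ k * y ^ (m - k) ≤ (m + 1) / 2 * (x ^ m + y ^ m) := by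
  have hrefl : ∑ k ∈ range (m + 1), x ^ k * y ^ (m - k) =
      ∑ k ∈ range (m + 1), x ^ (m - k) * y ^ k := by
    rw [← sum_range_reflect]
    refine sum_congr rfl fun k hk => ?_
    rw [Nat.add_sub_cancel, Nat.sub_sub_self (Nat.lt_succ_iff.1 (mem_range.1 hk))]
  have hpair : ∑ k ∈ range (m + 1), (x ^ k * y ^ (m - k) + x ^ (m - k) * y ^ k) ≤
      ∑ k ∈ range (m + 1), (x ^ m + y ^ m) :=
    sum_le_sum fun k hk =>
      pow_mul_pow_add_pow_mul_pow_le hx hy (Nat.lt_succ_iff.1 (mem_range.1 hk))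
  rw [sum_add_distrib, ← hrefl, sum_const, card_range, nsmul_eq_mul] at hpair
  push_cast at hpair
  linarith

lemma abs_pow_sub_pow_le_mul_add (a b : α) {q : ℕ} (hq : 1 ≤ q) :
    |a ^ q - b ^ q| ≤ q / 2 * |a - b| * (|a| ^ (q - 1) + |b| ^ (q - 1)) := by
  obtain ⟨m, rfl⟩ := Nat.exists_eq_add_of_le' hq
  rw [← geom_sum₂_mul, abs_mul, mul_comm, Nat.add_sub_cancel]
  calc |a - b| * |∑ k ∈ range (m + 1), a ^ k * b ^ (m + 1 - 1 - k)|
      ≤ |a - b| * ∑ k ∈ range (m + 1), |a| ^ k * |b| ^ (m - k) := by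
        gcongr
        refine (abs_sum_le_sum_abs _ _).trans_eq (sum_congr rfl fun k _ => ?_)
        rw [abs_mul, abs_pow, abs_pow, Nat.add_sub_cancel]
    _ ≤ |a - b| * ((m + 1) / 2 * (|a| ^ m + |b| ^ m)) := by
        gcongr; exact geom_sum₂_le_mul_add_pow (abs_nonneg a) (abs_nonneg b) m
    _ = ((m + 1 : ℕ) : α) / 2 * |a - b| * (|a| ^ m + |b| ^ m) := by push_cast; ring

lemma two_mul_le_mul_sq_add_inv_mul_sq {s : α} (hs : 0 < s) (x y : α) :
    2 * x * y ≤ s * x ^ 2 + s⁻¹ * y ^ 2 := by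
  have key : s * (s * x ^ 2 + s⁻¹ * y ^ 2 - 2 * x * y) = (s * x - y) ^ 2 := by
    field_simp; ring
  nlinarith [sq_nonneg (s * x - y)]

lemma mul_abs_pow_sub_pow_mul_le {a b s p t : α} (hs : 0 < s) (hp : 0 ≤ p) (ht : 0 ≤ t)
    {q : ℕ} (hq : 1 ≤ q) :
    p * (|a ^ q - b ^ q| * t) ≤
      q / 4 * ((s * (|a - b| * t) ^ 2 + s⁻¹ * p ^ 2) * (|a| ^ (q - 1) + |b| ^ (q - 1))) := by
  calc p * (|a ^ q - b ^ q| * t)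
      ≤ p * (q / 2 * |a - b| * (|a| ^ (q - 1) + |b| ^ (q - 1)) * t) := by
        gcongr; exact abs_pow_sub_pow_le_mul_add a b hq
    _ = q / 4 * (2 * (|a - b| * t) * p * (|a| ^ (q - 1) + |b| ^ (q - 1))) := by ring
    _ ≤ q / 4 * ((s * (|a - b| * t) ^ 2 + s⁻¹ * p ^ 2) * (|a| ^ (q - 1) + |b| ^ (q - 1))) := by
        gcongr; exact two_mul_le_mul_sq_add_inv_mul_sq hs _ _

end Scalar

namespace Matrix

variable {n 𝕜 : Type*} [Fintype n] [RCLike 𝕜]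

lemma trace_star_mul_eq_sum (M N : Matrix n n 𝕜) :
    trace (star M * N) = ∑ i, ∑ j, star (M i j) * N i j := by
  rw [sum_comm]
  simp [trace, mul_apply, star_apply]

lemma mul_star_apply_self (M : Matrix n n 𝕜) (i : n) :
    (M * star M) i i = ((∑ j, ‖M i j‖ ^ 2 : ℝ) : 𝕜) := by
  simp only [mul_apply, star_apply, ← starRingEnd_apply, RCLike.mul_conj]
  norm_cast

lemma star_mul_apply_self (M : Matrix n n 𝕜) (j : n) :
    (star M * M) j j = ((∑ i, ‖M i j‖ ^ 2 : ℝ) : 𝕜) := by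
  simp only [mul_apply, star_apply, ← starRingEnd_apply, RCLike.conj_mul]
  norm_cast

namespace IsHermitian

variable [DecidableEq n] {A B : Matrix n n 𝕜} (hA : A.IsHermitian) (hB : B.IsHermitian)

lemma cfc_eq_conj (f : ℝ → ℝ) :
    cfc f A = (hA.eigenvectorUnitary : Matrix n n 𝕜) *
      diagonal (fun i => (f (hA.eigenvalues i) : 𝕜)) *
        star (hA.eigenvectorUnitary : Matrix n n 𝕜) := by
  rw [hA.cfc_eq, IsHermitian.cfc, Unitary.conjStarAlgAut_apply]; rfl

lemma star_eigenvectorUnitary_mul_cfc (f : ℝ → ℝ) :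
    star (hA.eigenvectorUnitary : Matrix n n 𝕜) * cfc f A =
      diagonal (fun i => (f (hA.eigenvalues i) : 𝕜)) *
        star (hA.eigenvectorUnitary : Matrix n n 𝕜) := by
  rw [hA.cfc_eq_conj, ← mul_assoc, ← mul_assoc, Unitary.coe_star_mul_self, one_mul]

lemma cfc_mul_eigenvectorUnitary (f : ℝ → ℝ) :
    cfc f A * (hA.eigenvectorUnitary : Matrix n n 𝕜) =
      (hA.eigenvectorUnitary : Matrix n n 𝕜) *
        diagonal (fun i => (f (hA.eigenvalues i) : 𝕜)) := by
  rw [hA.cfc_eq_conj, mul_assoc, Unitary.coe_star_mul_self, mul_one]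

lemma trace_mul_cfc (M : Matrix n n 𝕜) (f : ℝ → ℝ) :
    trace (M * cfc f A) = ∑ i, (star (hA.eigenvectorUnitary : Matrix n n 𝕜) * M *
      hA.eigenvectorUnitary) i i * f (hA.eigenvalues i) := by
  rw [hA.cfc_eq_conj, ← mul_assoc, ← mul_assoc, trace_mul_comm, ← mul_assoc, ← mul_assoc]
  simp only [trace, diag, mul_diagonal]

noncomputable def eigenbasisMatrix (X : Matrix n n 𝕜) : Matrix n n 𝕜 :=
  star (hA.eigenvectorUnitary : Matrix n n 𝕜) * X * hB.eigenvectorUnitary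

lemma eigenbasisMatrix_cfc_sub_cfc_apply (f g : ℝ → ℝ) (i j : n) :
    eigenbasisMatrix hA hB (cfc f A - cfc g B) i j =
      ((f (hA.eigenvalues i) - g (hB.eigenvalues j) : ℝ) : 𝕜) *
        eigenbasisMatrix hA hB 1 i j := by
  rw [eigenbasisMatrix, eigenbasisMatrix, Matrix.mul_sub, Matrix.sub_mul,
    star_eigenvectorUnitary_mul_cfc, mul_assoc _ (cfc g B), cfc_mul_eigenvectorUnitary]
  rw [mul_assoc (diagonal _), ← mul_assoc (star _) _ (diagonal _)]
  simp only [sub_apply, diagonal_mul, mul_diagonal, mul_one]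
  push_cast
  ring

lemma eigenbasisMatrix_sub_apply (i j : n) :
    eigenbasisMatrix hA hB (A - B) i j =
      ((hA.eigenvalues i - hB.eigenvalues j : ℝ) : 𝕜) * eigenbasisMatrix hA hB 1 i j := by
  have h := hA.eigenbasisMatrix_cfc_sub_cfc_apply hB id id i j
  rwa [cfc_id ℝ A, cfc_id ℝ B] at h

lemma eigenbasisMatrix_pow_sub_pow_apply (q : ℕ) (i j : n) :
    eigenbasisMatrix hA hB (A ^ q - B ^ q) i j =
      ((hA.eigenvalues i ^ q - hB.eigenvalues j ^ q : ℝ) : 𝕜) *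
        eigenbasisMatrix hA hB 1 i j := by
  have h := hA.eigenbasisMatrix_cfc_sub_cfc_apply hB (· ^ q) (· ^ q) i j
  rwa [cfc_pow_id A q, cfc_pow_id B q] at h

lemma trace_mul_eq_sum_eigenbasisMatrix {X : Matrix n n 𝕜} (hX : X.IsHermitian)
    (Y : Matrix n n 𝕜) :
    trace (X * Y) =
      ∑ i, ∑ j, star (eigenbasisMatrix hA hB X i j) * eigenbasisMatrix hA hB Y i j := by
  set U := (hA.eigenvectorUnitary : Matrix n n 𝕜)
  set V := (hB.eigenvectorUnitary : Matrix n n 𝕜)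
  have hX' : star X = X := hX
  have hU : U * star U = 1 := Unitary.mul_star_self_of_mem hA.eigenvectorUnitary.2
  have hV : V * star V = 1 := Unitary.mul_star_self_of_mem hB.eigenvectorUnitary.2
  calc trace (X * Y) = trace (star V * (X * Y) * V) := by
        rw [trace_mul_comm (star V * _), ← mul_assoc, hV, one_mul]
    _ = trace (star V * (star X * (U * star U) * Y) * V) := by rw [hU, mul_one, hX']
    _ = trace (star (star U * X * V) * (star U * Y * V)) := by
        simp only [star_mul, star_star, mul_assoc]
    _ = _ := trace_star_mul_eq_sum _ _

lemma trace_sq_mul_cfc_add_cfc {X : Matrix n n 𝕜} (hX : X.IsHermitian) (f : ℝ → ℝ) :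
    trace (X ^ 2 * (cfc f A + cfc f B)) = ((∑ i, ∑ j, (f (hA.eigenvalues i) +
      f (hB.eigenvalues j)) * ‖eigenbasisMatrix hA hB X i j‖ ^ 2 : ℝ) : 𝕜) := by
  set U := (hA.eigenvectorUnitary : Matrix n n 𝕜)
  set V := (hB.eigenvectorUnitary : Matrix n n 𝕜)
  set E := eigenbasisMatrix hA hB X
  have hX' : star X = X := hX
  have hU : U * star U = 1 := Unitary.mul_star_self_of_mem hA.eigenvectorUnitary.2
  have hV : V * star V = 1 := Unitary.mul_star_self_of_mem hB.eigenvectorUnitary.2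
  have hEA : star U * X ^ 2 * U = E * star E := by
    simp only [E, eigenbasisMatrix, star_mul, star_star, hX', mul_assoc]
    rw [← mul_assoc V, hV, one_mul, sq, mul_assoc]
  have hEB : star V * X ^ 2 * V = star E * E := by
    simp only [E, eigenbasisMatrix, star_mul, star_star, hX', mul_assoc]
    rw [← mul_assoc U, hU, one_mul, sq, mul_assoc]
  rw [mul_add, trace_add, hA.trace_mul_cfc, hB.trace_mul_cfc, hEA, hEB]
  simp only [mul_star_apply_self, star_mul_apply_self]
  push_cast
  simp only [sum_mul, add_mul, sum_add_distrib]
  congr 1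
  · exact sum_congr rfl fun i _ => sum_congr rfl fun j _ => mul_comm _ _
  · rw [sum_comm]
    exact sum_congr rfl fun i _ => sum_congr rfl fun j _ => mul_comm _ _

end IsHermitian

end Matrix

/-- Polynomial mean value trace inequality: for Hermitian `A, B, C`, every integer `q ≥ 1`
and every `s > 0`,
`|tr[C(A^q − B^q)]| ≤ (q/4) tr[(s(A−B)² + s⁻¹C²)(|A|^{q−1} + |B|^{q−1})]`,
where `|A|` is the matrix absolute value, obtained here by functional calculus. -/
theorem poly_mean_value_trace_inequality {d : ℕ} (A B C : Matrix (Fin d) (Fin d) ℂ)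
    (hA : A.IsHermitian) (hB : B.IsHermitian) (hC : C.IsHermitian)
    (q : ℕ) (hq : 1 ≤ q) (s : ℝ) (hs : 0 < s) :
    ‖Matrix.trace (C * (A ^ q - B ^ q))‖ ≤
      (q / 4 : ℝ) * (Matrix.trace ((s • (A - B) ^ 2 + s⁻¹ • C ^ 2) *
        (cfc (fun x : ℝ => |x| ^ (q - 1)) A + cfc (fun x : ℝ => |x| ^ (q - 1)) B))).re := by
  set a := hA.eigenvalues
  set b := hB.eigenvalues
  have hrhs : (Matrix.trace ((s • (A - B) ^ 2 + s⁻¹ • C ^ 2) *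
        (cfc (fun x : ℝ => |x| ^ (q - 1)) A + cfc (fun x : ℝ => |x| ^ (q - 1)) B))).re =
      ∑ i, ∑ j, (s * ‖hA.eigenbasisMatrix hB (A - B) i j‖ ^ 2 +
        s⁻¹ * ‖hA.eigenbasisMatrix hB C i j‖ ^ 2) *
        (|a i| ^ (q - 1) + |b j| ^ (q - 1)) := by
    rw [add_mul, smul_mul_assoc, smul_mul_assoc, trace_add, trace_smul, trace_smul,
      hA.trace_sq_mul_cfc_add_cfc hB (hA.sub hB), hA.trace_sq_mul_cfc_add_cfc hB hC]
    simp only [Complex.coe_algebraMap, Complex.real_smul, Complex.add_re, Complex.re_ofReal_mul,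
      Complex.ofReal_re, mul_sum, ← sum_add_distrib]
    exact sum_congr rfl fun i _ => sum_congr rfl fun j _ => by ring
  rw [hA.trace_mul_eq_sum_eigenbasisMatrix hB hC, hrhs, mul_sum]
  refine (norm_sum_le _ _).trans (sum_le_sum fun i _ => (norm_sum_le _ _).trans ?_)
  rw [mul_sum]
  refine sum_le_sum fun j _ => ?_
  rw [norm_mul, norm_star, hA.eigenbasisMatrix_pow_sub_pow_apply hB,
    hA.eigenbasisMatrix_sub_apply hB, norm_mul, norm_mul, RCLike.norm_ofReal, RCLike.norm_ofReal]
  exact mul_abs_pow_sub_pow_mul_le hs (norm_nonneg _) (norm_nonneg _) hq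
end

section
/- Young-type bound for powers of multiplication operators: let A, B be Hermitian d×d matrices, and for 0 ≤ k ≤ q−1 define 𝒜_k(M) = A^k M and ℬ_k(M) = M B^k on M^d. Then Σ_{k=0}^{q−1} |𝒜_k ℬ_{q−k−1}| ≼ (q/2)(|𝒜₁|^{q−1} + |ℬ₁|^{q−1}); equivalently, for every matrix M, Σ_{k=0}^{q−1} tr[M* |A|^k M |B|^{q−1−k}] ≤ (q/2) tr[M*(|A|^{q−1} M + M |B|^{q−1})]. -/
open scoped Matrix

lemma young_pair_bound {a b : ℝ} (ha : 0 ≤ a) (hb : 0 ≤ b) (k m : ℕ) :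
    a ^ k * b ^ m + a ^ m * b ^ k ≤ a ^ (k + m) + b ^ (k + m) := by
  rcases le_total a b with h | h
  · nlinarith [pow_le_pow_left₀ ha h k, pow_le_pow_left₀ ha h m, pow_nonneg ha k,
      pow_nonneg ha m, pow_add a k m, pow_add b k m]
  · nlinarith [pow_le_pow_left₀ hb h k, pow_le_pow_left₀ hb h m, pow_nonneg hb k,
      pow_nonneg hb m, pow_add a k m, pow_add b k m]

lemma young_scalar {a b : ℝ} (ha : 0 ≤ a) (hb : 0 ≤ b) (q : ℕ) :
    ∑ k ∈ Finset.range q, a ^ k * b ^ (q - 1 - k)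
      ≤ ((q : ℝ) / 2) * (a ^ (q - 1) + b ^ (q - 1)) := by
  have hrefl : ∑ k ∈ Finset.range q, a ^ k * b ^ (q - 1 - k)
      = ∑ k ∈ Finset.range q, a ^ (q - 1 - k) * b ^ k := by
    rw [← Finset.sum_range_reflect (fun k => a ^ (q - 1 - k) * b ^ k) q]
    refine Finset.sum_congr rfl fun k hk => ?_
    have hk' : k < q := Finset.mem_range.mp hk
    have : q - 1 - (q - 1 - k) = k := by omega
    rw [this]
  have key : (2 : ℝ) * ∑ k ∈ Finset.range q, a ^ k * b ^ (q - 1 - k)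
      ≤ q * (a ^ (q - 1) + b ^ (q - 1)) := by
    calc (2 : ℝ) * ∑ k ∈ Finset.range q, a ^ k * b ^ (q - 1 - k)
        = ∑ k ∈ Finset.range q, (a ^ k * b ^ (q - 1 - k) + a ^ (q - 1 - k) * b ^ k) := by
          rw [Finset.sum_add_distrib, ← hrefl]; ring
      _ ≤ ∑ k ∈ Finset.range q, (a ^ (q - 1) + b ^ (q - 1)) := by
          refine Finset.sum_le_sum fun k hk => ?_
          have hk' : k + (q - 1 - k) = q - 1 := by
            have := Finset.mem_range.mp hk; omega
          simpa [hk'] using young_pair_bound ha hb k (q - 1 - k)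
      _ = q * (a ^ (q - 1) + b ^ (q - 1)) := by
          rw [Finset.sum_const, Finset.card_range]; push_cast; ring
  linarith

lemma trace_diag_diag {d : ℕ} (N : Matrix (Fin d) (Fin d) ℂ) (da db : Fin d → ℝ) :
    Matrix.trace (Nᴴ * Matrix.diagonal (fun i => (da i : ℂ)) * N *
      Matrix.diagonal (fun j => (db j : ℂ)))
    = ((∑ i, ∑ j, da i * db j * Complex.normSq (N i j) : ℝ) : ℂ) := by
  simp only [Matrix.trace, Matrix.diag, Matrix.mul_apply, Matrix.conjTranspose_apply,
    Matrix.diagonal_apply, ite_mul, mul_ite, zero_mul, mul_zero,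
    Finset.sum_ite_eq, Finset.sum_ite_eq', Finset.mem_univ, if_true]
  push_cast
  rw [Finset.sum_comm (γ := Fin d)]
  refine Finset.sum_congr rfl fun j _ => ?_
  rw [Finset.sum_mul]
  refine Finset.sum_congr rfl fun i _ => ?_
  rw [Complex.normSq_eq_conj_mul_self]
  simp only [Complex.star_def]
  ring

/-- Young-type bound for powers of the multiplication operators `𝒜_k(M) = A^k M`,
`ℬ_k(M) = M B^k`: for Hermitian `A, B`, every `q ≥ 1`, and every matrix `M`,
`Σ_{k=0}^{q−1} tr[M* |A|^k M |B|^{q−1−k}] ≤ (q/2) tr[M* (|A|^{q−1} M + M |B|^{q−1})]`,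
where `|A|` denotes the matrix absolute value. -/
theorem young_power_multiplication_operators {d : ℕ} (A B : Matrix (Fin d) (Fin d) ℂ)
    (hA : A.IsHermitian) (hB : B.IsHermitian) (q : ℕ) (hq : 1 ≤ q)
    (M : Matrix (Fin d) (Fin d) ℂ) :
    (∑ k ∈ Finset.range q,
        (Matrix.trace (Mᴴ * cfc (fun x : ℝ => |x|) A ^ k * M *
          cfc (fun x : ℝ => |x|) B ^ (q - 1 - k))).re) ≤
      ((q : ℝ) / 2) * (Matrix.trace (Mᴴ * (cfc (fun x : ℝ => |x|) A ^ (q - 1) * M +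
        M * cfc (fun x : ℝ => |x|) B ^ (q - 1)))).re := by
  set u : Matrix (Fin d) (Fin d) ℂ := (Matrix.IsHermitian.eigenvectorUnitary hA : Matrix (Fin d) (Fin d) ℂ) with hu_def
  set v : Matrix (Fin d) (Fin d) ℂ := (Matrix.IsHermitian.eigenvectorUnitary hB : Matrix (Fin d) (Fin d) ℂ) with hv_def
  set a : Fin d → ℝ := fun i => |hA.eigenvalues i| with ha_def
  set b : Fin d → ℝ := fun j => |hB.eigenvalues j| with hb_def
  set N : Matrix (Fin d) (Fin d) ℂ := star u * M * v with hN_def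
  have hu1 : star u * u = 1 := Unitary.star_mul_self_of_mem (SetLike.coe_mem _)
  have hu2 : u * star u = 1 := Unitary.mul_star_self_of_mem (SetLike.coe_mem _)
  have hv1 : star v * v = 1 := Unitary.star_mul_self_of_mem (SetLike.coe_mem _)
  have hv2 : v * star v = 1 := Unitary.mul_star_self_of_mem (SetLike.coe_mem _)
  have hP : ∀ k : ℕ, cfc (fun x : ℝ => |x|) A ^ k
      = u * Matrix.diagonal (fun i => ((a i ^ k : ℝ) : ℂ)) * star u := by
    intro k
    rw [← cfc_pow (fun x : ℝ => |x|) k (a := A), hA.cfc_eq, Matrix.IsHermitian.cfc]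
    rfl
  have hQ : ∀ k : ℕ, cfc (fun x : ℝ => |x|) B ^ k
      = v * Matrix.diagonal (fun j => ((b j ^ k : ℝ) : ℂ)) * star v := by
    intro k
    rw [← cfc_pow (fun x : ℝ => |x|) k (a := B), hB.cfc_eq, Matrix.IsHermitian.cfc]
    rfl
  have hNH : Nᴴ = star v * Mᴴ * u := by
    simp [hN_def, Matrix.conjTranspose_mul, Matrix.star_eq_conjTranspose,
      Matrix.conjTranspose_conjTranspose, Matrix.mul_assoc]
  have htr : ∀ k m : ℕ,
      Matrix.trace (Mᴴ * cfc (fun x : ℝ => |x|) A ^ k * M * cfc (fun x : ℝ => |x|) B ^ m)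
      = ((∑ i, ∑ j, a i ^ k * b j ^ m * Complex.normSq (N i j) : ℝ) : ℂ) := by
    intro k m
    rw [hP k, hQ m]
    have hmat : Mᴴ * (u * Matrix.diagonal (fun i => ((a i ^ k : ℝ) : ℂ)) * star u) * M *
        (v * Matrix.diagonal (fun j => ((b j ^ m : ℝ) : ℂ)) * star v)
        = v * (Nᴴ * Matrix.diagonal (fun i => ((a i ^ k : ℝ) : ℂ)) * N *
          Matrix.diagonal (fun j => ((b j ^ m : ℝ) : ℂ))) * star v := by
      rw [hNH, hN_def]
      simp only [← Matrix.mul_assoc]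
      rw [hv2, Matrix.one_mul]
    rw [hmat, Matrix.trace_mul_cycle, ← Matrix.mul_assoc, hv1, Matrix.one_mul,
      trace_diag_diag]
  -- rewrite RHS trace
  have hsplit : Mᴴ * (cfc (fun x : ℝ => |x|) A ^ (q - 1) * M +
        M * cfc (fun x : ℝ => |x|) B ^ (q - 1))
      = Mᴴ * cfc (fun x : ℝ => |x|) A ^ (q - 1) * M * cfc (fun x : ℝ => |x|) B ^ 0
        + Mᴴ * cfc (fun x : ℝ => |x|) A ^ 0 * M * cfc (fun x : ℝ => |x|) B ^ (q - 1) := by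
    simp only [pow_zero, Matrix.mul_one, mul_one, mul_add, Matrix.mul_assoc]
  rw [hsplit, Matrix.trace_add]
  simp only [htr, Complex.ofReal_re, Complex.add_re]
  have hc : ∀ i j, 0 ≤ Complex.normSq (N i j) := fun i j => Complex.normSq_nonneg _
  have ha0 : ∀ i, 0 ≤ a i := fun i => abs_nonneg _
  have hb0 : ∀ j, 0 ≤ b j := fun j => abs_nonneg _
  simp only [pow_zero, one_mul, mul_one]
  calc ∑ k ∈ Finset.range q, ∑ i, ∑ j, a i ^ k * b j ^ (q - 1 - k) * Complex.normSq (N i j)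
      = ∑ i, ∑ j, ∑ k ∈ Finset.range q, a i ^ k * b j ^ (q - 1 - k) * Complex.normSq (N i j) := by
        rw [Finset.sum_comm]
        exact Finset.sum_congr rfl fun i _ => Finset.sum_comm
    _ ≤ ∑ i, ∑ j, ((q : ℝ) / 2) * (a i ^ (q - 1) + b j ^ (q - 1)) * Complex.normSq (N i j) := by
        refine Finset.sum_le_sum fun i _ => Finset.sum_le_sum fun j _ => ?_
        rw [← Finset.sum_mul]
        exact mul_le_mul_of_nonneg_right (young_scalar (ha0 i) (hb0 j) q) (hc i j)
    _ = ((q : ℝ) / 2) * ((∑ i, ∑ j, a i ^ (q - 1) * Complex.normSq (N i j))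
          + ∑ i, ∑ j, b j ^ (q - 1) * Complex.normSq (N i j)) := by
        rw [mul_add, Finset.mul_sum, Finset.mul_sum, ← Finset.sum_add_distrib]
        refine Finset.sum_congr rfl fun i _ => ?_
        rw [Finset.mul_sum, Finset.mul_sum, ← Finset.sum_add_distrib]
        refine Finset.sum_congr rfl fun j _ => ?_
        ring
end
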